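/- arXiv:math/0312344 — 2 statements merged into one kernel-verified Lean document; each statement's English description precedes it below -/
import Mathlib

section
/- Almost surely, for every pair s,t ∈ ℤ there exists k such that s and t lie in the same k block, i.e. B_k(s)=B_k(t). -/
open MeasureTheory
open scoped Classical ENNReal

noncomputable section

namespace BHS

/-! ## Generic notions about specifications on a finite alphabet -/

/-- The left shift on two-sided sequences. -/
def shift {A : Type*} (ω : ℤ → A) : ℤ → A := fun i => ω (i + 1)

/-- The past of a two-sided sequence: `past ω n = ω (-(n+1))`,
i.e. the sequence `x₋₁, x₋₂, …`. -/
def past {A : Type*} (ω : ℤ → A) : ℕ → A := fun n => ω (-(n + 1 : ℤ))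

/-- The variation of a specification at distance `k`:
the supremum of `‖g b - g b'‖₁` over pasts agreeing in their first `k` coordinates. -/
def specVar {A : Type*} [Fintype A] (g : (ℕ → A) → A → ℝ) (k : ℕ) : ℝ :=
  sSup {r : ℝ | ∃ b b' : ℕ → A, (∀ i : ℕ, i < k → b i = b' i) ∧
    r = ∑ a : A, |g b a - g b' a|}

/-- `μ` is a (shift-invariant) Gibbs measure for the specification `g`. -/
def IsGibbs {A : Type*} [Fintype A] [MeasurableSpace A]
    (g : (ℕ → A) → A → ℝ) (μ : Measure (ℤ → A)) : Prop :=
  IsProbabilityMeasure μ ∧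
  (∀ s : Set (ℤ → A), MeasurableSet s → μ (shift ⁻¹' s) = μ s) ∧
  ∀ f : A → ℝ,
    (MeasureTheory.condExp (MeasurableSpace.comap past inferInstance) μ
        (fun ω => f (ω 0))) =ᵐ[μ]
      (fun ω => ∑ a : A, g (past ω) a * f a)

/-- The coordinates of `μ` are i.i.d. fair ±1 coin flips (`true` = +1). -/
def IsCoinFlips {ι : Type*} (μ : Measure (ι → Bool)) : Prop :=
  IsProbabilityMeasure μ ∧
  ∀ (s : Finset ι) (f : ι → Bool),
    μ {y | ∀ i ∈ s, y i = f i} = (1 / 2 : ℝ≥0∞) ^ s.card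

/-! ## The construction of Berger, Hoffman and Sidoravicius -/

/-- `ℓ_k = ⌈(1+ε)^k⌉`. -/
def ell (ε : ℝ) (k : ℕ) : ℕ := ⌈(1 + ε) ^ k⌉₊

/-- `β_k = 2 ^ ℓ_k`. -/
def beta (ε : ℝ) (k : ℕ) : ℕ := 2 ^ ell ε k

/-- `ν_k = β_k / β_{k-1}`. -/
def nu (ε : ℝ) (k : ℕ) : ℝ := (beta ε k : ℝ) / (beta ε (k - 1) : ℝ)

/-- `K` satisfies the three inequalities required of `K(ε)`, for every `k ≥ K`. -/
def KGood (ε : ℝ) (K : ℕ) : Prop :=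
  ∀ k : ℕ, K ≤ k →
    ((1 - (2 : ℝ) ^ (-(ell ε k : ℝ))) ^
        ((beta ε k : ℝ) ^ (1 + ε) / (2 * (ell ε (k - 1) : ℝ))) <
      (2 : ℝ) ^ (-(3 * k : ℝ))) ∧
    (nu ε k ^ (-ε) ≤ (2 : ℝ) ^ (-(3 * k : ℝ))) ∧
    ((2 : ℝ) ^ (nu ε k ^ (1 - ε)) * ((2 : ℝ) ^ (-(k : ℝ))) ^ (nu ε k ^ (1 - ε) / 2) ≤
      (2 : ℝ) ^ (-(3 * k : ℝ)))

/-- The word `I_k` (that is, `ℓ_k − 1` pluses followed by one minus; `true` = +1)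
ends at position `c` in the two-sided sequence `y`. -/
def EndsAt (ε : ℝ) (k : ℕ) (y : ℤ → Bool) (c : ℤ) : Prop :=
  y c = false ∧ ∀ i : ℕ, 1 ≤ i → i ≤ ell ε k - 1 → y (c - (i : ℤ)) = true

/-- `[a, b)` is a (complete) `k` block of `y`. -/
def IsBlock (ε : ℝ) (k : ℕ) (y : ℤ → Bool) (a b : ℤ) : Prop :=
  a < b ∧ EndsAt ε k y a ∧ EndsAt ε k y b ∧
    ∀ c : ℤ, a < c → c < b → ¬EndsAt ε k y c

/-- The left endpoint of the `k` block containing `t`. -/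
def leftEnd (ε : ℝ) (k : ℕ) (y : ℤ → Bool) (t : ℤ) : ℤ :=
  sSup {c : ℤ | c ≤ t ∧ EndsAt ε k y c}

/-- The right endpoint of the `k` block containing `t`. -/
def rightEnd (ε : ℝ) (k : ℕ) (y : ℤ → Bool) (t : ℤ) : ℤ :=
  sInf {c : ℤ | t < c ∧ EndsAt ε k y c}

/-- `t` lies in the beginning of the `k` block containing it:  for `k = K` this means
`t - a < β_K^{1-ε}`, and for `k ≠ K` it means that `t` lies in one of the first
`⌈ν_k^{1-ε}⌉` `(k-1)` blocks of its `k` block. -/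
def InBeginning (ε : ℝ) (K k : ℕ) (y : ℤ → Bool) (t : ℤ) : Prop :=
  if k = K then ((t - leftEnd ε k y t : ℤ) : ℝ) < (beta ε K : ℝ) ^ (1 - ε)
  else ((Finset.Ioc (leftEnd ε k y t) t).filter (fun c => EndsAt ε (k - 1) y c)).card <
    ⌈nu ε k ^ (1 - ε)⌉₊

/-- `t` lies in the opening of the `k` block containing it. -/
def InOpening (ε : ℝ) (K k : ℕ) (y : ℤ → Bool) (t : ℤ) : Prop :=
  ∀ j : ℕ, K ≤ j → j ≤ k →
    InBeginning ε K j y t ∧ (t - leftEnd ε j y t) < (beta ε (j + 1) : ℤ)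

/-- The opening `C(B)` of the `k` block `B = [a, b)`. -/
def opening (ε : ℝ) (K k : ℕ) (y : ℤ → Bool) (a b : ℤ) : Finset ℤ :=
  (Finset.Ico a b).filter (fun t => InOpening ε K k y t)

/-- The `k` block `[a, b)` is good. -/
def GoodBlock (ε : ℝ) (K k : ℕ) (y : ℤ → Bool) (a b : ℤ) : Prop :=
  ((b - a : ℤ) : ℝ) < (beta ε k : ℝ) ^ (1 + ε) ∧
  (beta ε k : ℝ) ^ (1 - ε) * (2 : ℝ) ^ (-(k : ℝ)) < ((opening ε K k y a b).card : ℝ)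

/-- The `k` block containing `t` is good. -/
def GoodAt (ε : ℝ) (K k : ℕ) (y : ℤ → Bool) (t : ℤ) : Prop :=
  GoodBlock ε K k y (leftEnd ε k y t) (rightEnd ε k y t)

/-- `t` is `k` beautiful. -/
def Beautiful (ε : ℝ) (K k : ℕ) (y : ℤ → Bool) (t : ℤ) : Prop :=
  ∀ j : ℕ, k ≤ j → GoodAt ε K j y t ∧ ¬InBeginning ε K j y t

/-! ### The specification `g^ε` -/

/-- The two-sided sequence `ȳ` built from the past `y = (y₋₁, y₋₂, …)` and the
candidate value `y₀` (positions `> 0` are filled with junk `true`s). -/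
def ybar (y : ℕ → Bool) (y0 : Bool) : ℤ → Bool := fun i =>
  if i = 0 then y0 else if i < 0 then y ((-i).toNat - 1) else true

/-- The set of levels `k ≥ K` such that `0` lies in the opening of its `k` block. -/
def kZeroSet (ε : ℝ) (K : ℕ) (yb : ℤ → Bool) : Set ℕ :=
  {k : ℕ | K ≤ k ∧ InOpening ε K k yb 0}

/-- `k₀`, with the convention that it equals `K - 1` when the above set is empty
(the unbounded case `k₀ = ∞` is handled separately). -/
def kZero (ε : ℝ) (K : ℕ) (yb : ℤ → Bool) : ℕ :=
  if (kZeroSet ε K yb).Nonempty then sSup (kZeroSet ε K yb) else K - 1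

/-- The opening of the (partial) `k` block of `yb` containing `0`. -/
def Cblock (ε : ℝ) (K k : ℕ) (yb : ℤ → Bool) : Finset ℤ :=
  opening ε K k yb (leftEnd ε k yb 0) 1

/-- The set `S`: the opening of the `(k₀+1)` block containing `0`, with the maximal
element removed if its cardinality is even; `S = ∅` when `k₀ = ∞`. -/
def Sset (ε : ℝ) (K : ℕ) (yb : ℤ → Bool) : Finset ℤ :=
  if BddAbove (kZeroSet ε K yb) then
    if Even (Cblock ε K (kZero ε K yb + 1) yb).card then
      (Cblock ε K (kZero ε K yb + 1) yb).erase
        (WithBot.unbotD 0 (Cblock ε K (kZero ε K yb + 1) yb).max)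
    else Cblock ε K (kZero ε K yb + 1) yb
  else ∅

/-- The bias `υ`. -/
def upsilon (ε : ℝ) (K : ℕ) (yb : ℤ → Bool) : ℝ :=
  if Sset ε K yb = ∅ then 0
  else if ∃ t ∈ Sset ε K yb, t < -(beta ε (kZero ε K yb + 2) : ℤ) then 0
  else if kZeroSet ε K yb = ∅ then 0.4
  else (beta ε (kZero ε K yb) : ℝ) ^ (-(1 : ℝ) / 2 + ε)

/-- The ±1 value of the past `x = (x₋₁, x₋₂, …)` at the negative position `t`. -/
def xbar (x : ℕ → Bool) (t : ℤ) : ℝ := if x ((-t).toNat - 1) = true then 1 else -1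

/-- `g₁(x, y, y₀)`: the probability that `x₀ = +1` given the pasts `x`, `y`
and the value `y₀`. -/
def g1 (ε : ℝ) (K : ℕ) (x y : ℕ → Bool) (y0 : Bool) : ℝ :=
  if Sset ε K (ybar y y0) = ∅ then 1 / 2
  else 1 / 2 + upsilon ε K (ybar y y0) *
    Real.sign (∑ t ∈ Sset ε K (ybar y y0), xbar x t)

/-- The specification `g^ε` on the four letter alphabet `{±1}² = Bool × Bool`
(first coordinate `x`, second coordinate `y`, `true` = +1); the argument
`b : ℕ → Bool × Bool` is the past `((x₋₁,y₋₁), (x₋₂,y₋₂), …)`. -/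
def gspec (ε : ℝ) (K : ℕ) (b : ℕ → Bool × Bool) : Bool × Bool → ℝ := fun a =>
  if a.1 = true then (1 / 2) * g1 ε K (fun i => (b i).1) (fun i => (b i).2) a.2
  else (1 / 2) * (1 - g1 ε K (fun i => (b i).1) (fun i => (b i).2) a.2)

/-! ### Signatures -/

/-- `C′(B)`: the opening of `B`, with the maximum removed if `|C(B)|` is even. -/
def Cprime (ε : ℝ) (K k : ℕ) (y : ℤ → Bool) (a b : ℤ) : Finset ℤ :=
  if Even (opening ε K k y a b).card then
    (opening ε K k y a b).erase (WithBot.unbotD 0 (opening ε K k y a b).max)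
  else opening ε K k y a b

/-- The signature `X(B_k(t))` of the `k` block containing `t`. -/
def signature (ε : ℝ) (K k : ℕ) (ω : ℤ → Bool × Bool) (t : ℤ) : ℝ :=
  Real.sign (∑ s ∈ Cprime ε K k (fun i => (ω i).2)
      (leftEnd ε k (fun i => (ω i).2) t) (rightEnd ε k (fun i => (ω i).2) t),
    (if (ω s).1 = true then (1 : ℝ) else -1))

/-! Fix `s ≤ t` and a level `k`. Disjoint windows of length `ℓ_k` read the word `I_k` independently,
each with probability `2^{-ℓ_k}`, so infinitely many windows to the left of `s` (or to the right
of `t`) almost surely contain an end of `I_k`. On the other hand, by a union bound `I_k` ends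
somewhere in `(s, t]` with probability at most `(t - s) 2^{-ℓ_k}`, which tends to `0` as `ℓ_k → ∞`;
so almost surely some level `k` has no end of `I_k` in `(s, t]`, and then the `k` block containing
`s` also contains `t`. There are only countably many pairs `(s, t)`. -/

open Filter Topology

section CoinFlips

variable {ι κ σ : Type*} {μ : Measure (ι → Bool)}

theorem IsCoinFlips.measure_comp_mem [Fintype κ] (hμ : IsCoinFlips μ) {p : κ → ι}
    (hp : p.Injective) (T : Finset (κ → Bool)) :
    μ {y | y ∘ p ∈ T} = T.card * (1 / 2 : ℝ≥0∞) ^ Fintype.card κ := by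
  have hfiber : ∀ f : κ → Bool,
      μ ((fun y => y ∘ p) ⁻¹' {f}) = (1 / 2 : ℝ≥0∞) ^ Fintype.card κ := by
    intro f
    have hcyl : (fun y : ι → Bool => y ∘ p) ⁻¹' {f} =
        {y | ∀ i ∈ Finset.univ.map ⟨p, hp⟩, y i = Function.extend p f default i} := by
      ext y
      simp [funext_iff, hp.extend_apply]
    rw [hcyl, hμ.2, Finset.card_map, Finset.card_univ]
  have hmeas : Measurable fun y : ι → Bool => y ∘ p :=
    measurable_pi_lambda _ fun i => measurable_pi_apply (p i)
  have hunion : {y | y ∘ p ∈ T} = ⋃ f ∈ T, (fun y => y ∘ p) ⁻¹' {f} := by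
    ext y
    simp
  rw [hunion, measure_biUnion_finset (fun f _ g _ hfg => Set.disjoint_left.2 fun y hf hg =>
      hfg (hf.symm.trans hg : f = g)) (fun f _ => hmeas (measurableSet_singleton f)),
    Finset.sum_congr rfl fun f _ => hfiber f, Finset.sum_const, nsmul_eq_mul]

theorem IsCoinFlips.measure_forall_window_ne [Fintype κ] [Fintype σ] (hμ : IsCoinFlips μ)
    {p : κ × σ → ι} (hp : p.Injective) (w : σ → Bool) :
    μ {y | ∀ j, (fun i => y (p (j, i))) ≠ w} =
      (1 - (1 / 2 : ℝ≥0∞) ^ Fintype.card σ) ^ Fintype.card κ := by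
  set T := (Fintype.piFinset fun _ : κ => Finset.univ.erase w).map
    (Equiv.curry κ σ Bool).symm.toEmbedding
  have hT : {y : ι → Bool | ∀ j, (fun i => y (p (j, i))) ≠ w} = {y | y ∘ p ∈ T} := by
    ext y
    simp only [ne_eq, Set.mem_ofPred_eq, Equiv.curry, Equiv.symm_mk, Finset.mem_map_equiv,
      Equiv.coe_fn_mk, Fintype.mem_piFinset, Finset.mem_erase, Finset.mem_univ, and_true, T]
    rfl
  have hcard : T.card = (2 ^ Fintype.card σ - 1) ^ Fintype.card κ := by
    simp [T, Fintype.card_piFinset, Finset.card_erase_of_mem]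
  have hword : ((2 ^ Fintype.card σ - 1 : ℕ) : ℝ≥0∞) * (1 / 2) ^ Fintype.card σ =
      1 - (1 / 2) ^ Fintype.card σ := by
    rw [ENNReal.natCast_sub, ENNReal.sub_mul (fun _ _ => by simp), Nat.cast_pow,
      Nat.cast_ofNat, ← mul_pow, one_div, ENNReal.mul_inv_cancel two_ne_zero ENNReal.ofNat_ne_top,
      one_pow, Nat.cast_one, one_mul]
  rw [hT, hμ.measure_comp_mem hp, hcard, Fintype.card_prod, mul_comm (Fintype.card κ), pow_mul,
    Nat.cast_pow, ← mul_pow, hword]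

theorem IsCoinFlips.measure_forall_window_ne_eq_zero [Fintype σ] (hμ : IsCoinFlips μ)
    {p : ℕ × σ → ι} (hp : p.Injective) (w : σ → Bool) :
    μ {y | ∀ j, (fun i => y (p (j, i))) ≠ w} = 0 := by
  set r := 1 - (1 / 2 : ℝ≥0∞) ^ Fintype.card σ
  have hr : r < 1 := ENNReal.sub_lt_self ENNReal.one_ne_top one_ne_zero (by simp)
  have hbound : ∀ n : ℕ, μ {y | ∀ j, (fun i => y (p (j, i))) ≠ w} ≤ r ^ n := by
    intro n
    have hpn : (fun x : Fin n × σ => p (x.1, x.2)).Injective := fun x x' h => by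
      simpa [Prod.ext_iff, Fin.ext_iff] using hp h
    calc μ {y | ∀ j, (fun i => y (p (j, i))) ≠ w}
        ≤ μ {y | ∀ j : Fin n, (fun i => y (p (j, i))) ≠ w} :=
          measure_mono fun y hy j => hy j
      _ = r ^ n := by rw [hμ.measure_forall_window_ne hpn, Fintype.card_fin]
  exact nonpos_iff_eq_zero.1
    (ge_of_tendsto' (ENNReal.tendsto_pow_atTop_nhds_zero_of_lt_one hr) hbound)

end CoinFlips

theorem injective_sub_of_separated {α : Type*} {ℓ : ℕ} {c : α → ℤ}
    (hc : Pairwise fun j j' => (ℓ : ℤ) ≤ |c j - c j'|) :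
    (fun x : α × Fin ℓ => c x.1 - x.2).Injective := by
  rintro ⟨j, i⟩ ⟨j', i'⟩ h
  have hi := i.isLt
  have hi' := i'.isLt
  simp only at h
  obtain rfl : j = j' := by
    by_contra hne
    rcases abs_cases (c j - c j') with ⟨habs, _⟩ | ⟨habs, _⟩ <;>
      have := hc hne <;> omega
  simp only [Prod.mk.injEq, true_and]
  omega

theorem separated_progression {ℓ : ℕ} (a d : ℤ) (hd : (ℓ : ℤ) ≤ |d|) :
    Pairwise fun j j' : ℕ => (ℓ : ℤ) ≤ |(a + j * d) - (a + j' * d)| := by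
  intro j j' hne
  have hjj' : (1 : ℤ) ≤ |(j : ℤ) - j'| := Int.one_le_abs (sub_ne_zero.2 (by exact_mod_cast hne))
  calc (ℓ : ℤ) ≤ |(j : ℤ) - j'| * |d| := le_mul_of_one_le_left (abs_nonneg d) hjj' |>.trans' hd
    _ = |(a + j * d) - (a + j' * d)| := by rw [← abs_mul]; ring_nf

theorem ell_pos {ε : ℝ} (hε : -1 < ε) (k : ℕ) : 0 < ell ε k :=
  Nat.ceil_pos.2 (pow_pos (by linarith) k)

theorem tendsto_ell_atTop {ε : ℝ} (hε : 0 < ε) : Tendsto (ell ε) atTop atTop :=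
  tendsto_nat_ceil_atTop.comp (tendsto_pow_atTop_atTop_of_one_lt (by linarith))

theorem endsAt_iff_window {ε : ℝ} {k : ℕ} (hε : -1 < ε) {y : ℤ → Bool} {c : ℤ} :
    EndsAt ε k y c ↔ (fun i : Fin (ell ε k) => y (c - i)) = fun i => decide (i.val ≠ 0) := by
  have hℓ := ell_pos hε k
  simp only [funext_iff, Fin.forall_iff]
  constructor
  · rintro ⟨hc, hpast⟩ i hi
    rcases Nat.eq_zero_or_pos i with rfl | hi0
    · simpa using hc
    · simpa [hi0.ne'] using hpast i hi0 (by omega)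
  · intro h
    refine ⟨by simpa using h 0 hℓ, fun i hi1 hi2 => ?_⟩
    simpa [show i ≠ 0 by omega] using h i (by omega)

section Blocks

variable {ε : ℝ} {μ : Measure (ℤ → Bool)}

theorem IsCoinFlips.measure_endsAt (hε : -1 < ε) (hμ : IsCoinFlips μ) (k : ℕ) (c : ℤ) :
    μ {y | EndsAt ε k y c} = (1 / 2) ^ ell ε k := by
  have hp : (fun i : Fin (ell ε k) => c - i).Injective := fun i i' h => by
    simp only [sub_right_inj, Nat.cast_inj] at h
    exact Fin.ext h
  have hword := hμ.measure_comp_mem hp {fun i => decide (i.val ≠ 0)}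
  simp only [Finset.mem_singleton, Finset.card_singleton, Nat.cast_one, one_mul,
    Fintype.card_fin] at hword
  rw [← hword]
  exact congrArg μ (Set.ext fun y => endsAt_iff_window hε)

theorem IsCoinFlips.ae_exists_endsAt_progression (hε : -1 < ε) (hμ : IsCoinFlips μ) (k : ℕ)
    (a : ℤ) {d : ℤ} (hd : (ell ε k : ℤ) ≤ |d|) :
    ∀ᵐ y ∂μ, ∃ j : ℕ, EndsAt ε k y (a + j * d) := by
  rw [ae_iff]
  push Not
  simp_rw [endsAt_iff_window hε]
  exact hμ.measure_forall_window_ne_eq_zero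
    (injective_sub_of_separated (separated_progression a d hd)) _

theorem IsCoinFlips.ae_forall_exists_endsAt_le (hε : -1 < ε) (hμ : IsCoinFlips μ) (m : ℤ) :
    ∀ᵐ y ∂μ, ∀ k, ∃ c ≤ m, EndsAt ε k y c := by
  refine ae_all_iff.2 fun k => ?_
  filter_upwards [hμ.ae_exists_endsAt_progression hε k m (d := -ell ε k) (by simp)]
    with y ⟨j, hj⟩
  have : 0 ≤ (j : ℤ) * ell ε k := by positivity
  exact ⟨_, by linarith, hj⟩

theorem IsCoinFlips.ae_forall_exists_endsAt_gt (hε : -1 < ε) (hμ : IsCoinFlips μ) (M : ℤ) :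
    ∀ᵐ y ∂μ, ∀ k, ∃ c > M, EndsAt ε k y c := by
  refine ae_all_iff.2 fun k => ?_
  filter_upwards [hμ.ae_exists_endsAt_progression hε k (M + ell ε k) (d := ell ε k) (by simp)]
    with y ⟨j, hj⟩
  have : 0 ≤ (j : ℤ) * ell ε k := by positivity
  have : (0 : ℤ) < ell ε k := by exact_mod_cast ell_pos hε k
  exact ⟨_, by linarith, hj⟩

theorem IsCoinFlips.ae_exists_forall_not_endsAt (hε : 0 < ε) (hμ : IsCoinFlips μ) (m M : ℤ) :
    ∀ᵐ y ∂μ, ∃ k, ∀ c ∈ Finset.Ioc m M, ¬EndsAt ε k y c := by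
  rw [ae_iff]
  push Not
  have hbound : ∀ k, μ {y | ∀ k, ∃ c ∈ Finset.Ioc m M, EndsAt ε k y c} ≤
      (Finset.Ioc m M).card * (1 / 2 : ℝ≥0∞) ^ ell ε k := by
    intro k
    calc _ ≤ μ (⋃ c ∈ Finset.Ioc m M, {y | EndsAt ε k y c}) :=
          measure_mono fun y hy => by simpa using hy k
      _ ≤ ∑ c ∈ Finset.Ioc m M, μ {y | EndsAt ε k y c} := measure_biUnion_finset_le _ _
      _ = _ := by simp [hμ.measure_endsAt (by linarith)]
  have hlim : Tendsto (fun k => (Finset.Ioc m M).card * (1 / 2 : ℝ≥0∞) ^ ell ε k)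
      atTop (𝓝 0) := by
    simpa using ENNReal.Tendsto.const_mul ((ENNReal.tendsto_pow_atTop_nhds_zero_of_lt_one
      ENNReal.one_half_lt_one).comp (tendsto_ell_atTop hε)) (Or.inr (ENNReal.natCast_ne_top _))
  exact nonpos_iff_eq_zero.1 (ge_of_tendsto' hlim hbound)

theorem exists_isBlock_of_endsAt {k : ℕ} {y : ℤ → Bool} {m M : ℤ} (hmM : m ≤ M)
    (hleft : ∃ c ≤ m, EndsAt ε k y c) (hright : ∃ c > M, EndsAt ε k y c)
    (hmid : ∀ c ∈ Finset.Ioc m M, ¬EndsAt ε k y c) :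
    ∃ a b, IsBlock ε k y a b ∧ a ≤ m ∧ M < b := by
  obtain ⟨a, ⟨ham, ha⟩, hamax⟩ :=
    Int.exists_greatest_of_bdd (P := fun c => c ≤ m ∧ EndsAt ε k y c) ⟨m, fun _ h => h.1⟩ hleft
  obtain ⟨b, ⟨hMb, hb⟩, hbmin⟩ :=
    Int.exists_least_of_bdd (P := fun c => M < c ∧ EndsAt ε k y c) ⟨M + 1, fun _ h => h.1⟩ hright
  refine ⟨a, b, ⟨by omega, ha, hb, fun c hac hcb hc => ?_⟩, ham, hMb⟩
  rcases le_or_gt c m with hcm | hmc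
  · exact absurd (hamax c ⟨hcm, hc⟩) (by omega)
  rcases le_or_gt c M with hcM | hMc
  · exact hmid c (Finset.mem_Ioc.2 ⟨hmc, hcM⟩) hc
  · exact absurd (hbmin c ⟨hMc, hc⟩) (by omega)

end Blocks

end BHS

/-- Almost surely, any two integers `s`, `t` lie in a common `k`
block for some `k`. -/
theorem statement13 (ε : ℝ) (hε : ε ∈ Set.Ioo (0 : ℝ) (1 / 2))
    (μ : MeasureTheory.Measure (ℤ → Bool)) (hμ : BHS.IsCoinFlips μ) :
    ∀ᵐ y ∂μ, ∀ s t : ℤ, ∃ (k : ℕ) (a b : ℤ), BHS.IsBlock ε k y a b ∧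
      a ≤ s ∧ s < b ∧ a ≤ t ∧ t < b := by
  have hε' : -1 < ε := by linarith [hε.1]
  refine ae_all_iff.2 fun s => ae_all_iff.2 fun t => ?_
  filter_upwards [hμ.ae_forall_exists_endsAt_le hε' (min s t),
    hμ.ae_forall_exists_endsAt_gt hε' (max s t),
    hμ.ae_exists_forall_not_endsAt hε.1 (min s t) (max s t)] with y hleft hright ⟨k, hmid⟩
  obtain ⟨a, b, hab, ha, hb⟩ := BHS.exists_isBlock_of_endsAt min_le_max (hleft k) (hright k) hmid
  exact ⟨k, a, b, hab, ha.trans (min_le_left s t), (le_max_left s t).trans_lt hb,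
    ha.trans (min_le_right s t), (le_max_right s t).trans_lt hb⟩
end
end

section
/- There exists K such that for all k ≥ K the following holds. Let (y_j)_{j≥1} be i.i.d. uniform on {+1,−1} and let T = min{ c ≥ ℓ_k : (y_{c−ℓ_k+1},…,y_c)=I_k } be the position at which the first occurrence of I_k ends. Then for every integer j ≥ 0, 2^{−2j−2} < P( jβ_k < T ≤ (j+1)β_k ) < (5/2)^{−j}. -/
open MeasureTheory
open scoped Classical ENNReal

noncomputable section

/-! Since `I_k` cannot overlap itself, the probabilities `q n` that no occurrence of `I_k` ends in
`[ℓ, n]` (where `ℓ = ℓ_k` and `p = 2^(-ℓ)`) satisfy `q (n + 1) = q n - p q (n + 1 - ℓ)`, with `q n = 1`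
for `n < ℓ`, and `P(jβ < T ≤ (j+1)β) = q (jβ) - q ((j+1)β)`. The rest uses only the recursion:
* `q (n + 1) ≥ r q n` for `r = (1 + 21p/20)⁻¹`, by induction through `q n ≥ r^(ℓ-1) q (n + 1 - ℓ)`,
  hence `q (jβ) ≥ r^(jβ) ≥ 3⁻ʲ`;
* `q (n + 1) ≤ (1 - p) q n` once `n + 1 ≥ ℓ`, hence `q (jβ) ≤ (1 - p)^(j(β-ℓ)) ≤ (2/5)ʲ`;
* each of the last `β - ℓ + 1` steps before `(j+1)β` loses at least `p q ((j+1)β)`, hence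
  `q (jβ) - q ((j+1)β) ≥ (24/25) 3^(-j-1) > 4^(-j-1)`.
All of this holds as soon as `ℓ_k ≥ 8`.
-/

namespace BHS

/-- The recursion satisfied by `f n`, the probability that no occurrence of a word of length `L`
and probability `p` ends in `[L, n]`, when the word cannot overlap itself: an occurrence ending at
`n + 1` rules out occurrences ending in `(n + 1 - L, n + 1)`, and is independent of what happens
up to `n + 1 - L`. -/
structure IsAvoidanceSeq (p : ℝ) (L : ℕ) (f : ℕ → ℝ) : Prop where
  eq_one : ∀ n < L, f n = 1
  succ_eq : ∀ n, L ≤ n + 1 → f (n + 1) = f n - p * f (n + 1 - L)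

theorem pow_mul_le_of_mul_le_succ {f : ℕ → ℝ} {r : ℝ} (hr : 0 ≤ r) {N : ℕ}
    (h : ∀ i < N, r * f i ≤ f (i + 1)) {i m : ℕ} (him : i + m ≤ N) :
    r ^ m * f i ≤ f (i + m) := by
  induction m with
  | zero => simp
  | succ m ih =>
    calc r ^ (m + 1) * f i = r * (r ^ m * f i) := by ring
      _ ≤ r * f (i + m) := mul_le_mul_of_nonneg_left (ih (by omega)) hr
      _ ≤ f (i + (m + 1)) := h _ (by omega)

namespace IsAvoidanceSeq

variable {p r : ℝ} {L : ℕ} {f : ℕ → ℝ}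

theorem mul_le_succ (hf : IsAvoidanceSeq p L f) (hL : 0 < L) (hr0 : 0 ≤ r) (hr1 : r ≤ 1)
    (hp : p ≤ (1 - r) * r ^ (L - 1)) (k : ℕ) : r * f k ≤ f (k + 1) := by
  induction k using Nat.strong_induction_on with
  | _ k ih =>
  by_cases hk : L ≤ k + 1
  · have hchain : r ^ (L - 1) * f (k + 1 - L) ≤ f k := by
      simpa [show k + 1 - L + (L - 1) = k by omega] using
        pow_mul_le_of_mul_le_succ hr0 ih (i := k + 1 - L) (m := L - 1) (by omega)
    have hnonneg : 0 ≤ f (k + 1 - L) := by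
      have := pow_mul_le_of_mul_le_succ hr0 ih (i := 0) (m := k + 1 - L) (by omega)
      rw [hf.eq_one 0 hL, mul_one, zero_add] at this
      exact (pow_nonneg hr0 _).trans this
    rw [hf.succ_eq k hk]
    nlinarith [mul_le_mul_of_nonneg_right hp hnonneg,
      mul_le_mul_of_nonneg_left hchain (sub_nonneg.2 hr1)]
  · rw [hf.eq_one k (by omega), hf.eq_one (k + 1) (by omega)]
    simpa using hr1

theorem pow_le (hf : IsAvoidanceSeq p L f) (hL : 0 < L) (hr : 0 ≤ r)
    (hratio : ∀ k, r * f k ≤ f (k + 1)) (n : ℕ) : r ^ n ≤ f n := by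
  simpa [hf.eq_one 0 hL] using
    pow_mul_le_of_mul_le_succ hr (fun i _ => hratio i) (i := 0) (m := n) le_rfl

theorem antitone (hf : IsAvoidanceSeq p L f) (hp : 0 ≤ p) (hpos : ∀ n, 0 ≤ f n) :
    Antitone f := by
  refine antitone_nat_of_succ_le fun n => ?_
  by_cases hn : L ≤ n + 1
  · rw [hf.succ_eq n hn]
    exact sub_le_self _ (mul_nonneg hp (hpos _))
  · rw [hf.eq_one n (by omega), hf.eq_one (n + 1) (by omega)]

theorem le_one_sub_pow (hf : IsAvoidanceSeq p L f) (hL : 0 < L) (hp : 0 ≤ p) (hp1 : p ≤ 1)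
    (hpos : ∀ n, 0 ≤ f n) (n : ℕ) : f n ≤ (1 - p) ^ (n - (L - 1)) := by
  induction n with
  | zero => simp [hf.eq_one 0 hL]
  | succ n ih =>
    by_cases hn : L ≤ n + 1
    · have := hf.antitone hp hpos (show n + 1 - L ≤ n by omega)
      rw [hf.succ_eq n hn, show n + 1 - (L - 1) = n - (L - 1) + 1 by omega, pow_succ]
      nlinarith [mul_le_mul_of_nonneg_left this hp,
        mul_le_mul_of_nonneg_left ih (sub_nonneg.2 hp1)]
    · rw [hf.eq_one (n + 1) (by omega), show n + 1 - (L - 1) = 0 by omega, pow_zero]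

theorem mul_le_sub (hf : IsAvoidanceSeq p L f) (hp : 0 ≤ p) (hpos : ∀ n, 0 ≤ f n) {m : ℕ}
    (hm : L ≤ m + 1) (d : ℕ) : d * p * f (m + d) ≤ f m - f (m + d) := by
  induction d with
  | zero => simp
  | succ d ih =>
    have hrec := hf.succ_eq (m + d) (by omega)
    have h1 : f (m + d + 1) ≤ f (m + d + 1 - L) := hf.antitone hp hpos (by omega)
    have h2 : f (m + d + 1) ≤ f (m + d) := hf.antitone hp hpos (by omega)
    rw [← add_assoc]
    push_cast
    nlinarith [mul_le_mul_of_nonneg_left h1 hp,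
      mul_le_mul_of_nonneg_left h2 (mul_nonneg (Nat.cast_nonneg d) hp)]

end IsAvoidanceSeq

theorem one_add_pow_le_exp_mul {x : ℝ} (hx : -1 ≤ x) (n : ℕ) :
    (1 + x) ^ n ≤ Real.exp (n * x) := by
  rw [Real.exp_nat_mul]
  exact pow_le_pow_left₀ (by linarith) (by linarith [Real.add_one_le_exp x]) n

section Numerics

variable {L : ℕ}

theorem twentyfive_mul_le_two_pow (hL : 8 ≤ L) : 25 * L ≤ 2 ^ L := by
  induction L, hL using Nat.le_induction with
  | base => norm_num
  | succ n _ ih => rw [pow_succ]; omega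

theorem natCast_mul_half_pow_le (hL : 8 ≤ L) : (L : ℝ) * (1 / 2) ^ L ≤ 1 / 25 := by
  have : (25 * L : ℝ) ≤ 2 ^ L := by exact_mod_cast twentyfive_mul_le_two_pow hL
  rw [one_div_pow, mul_one_div, div_le_div_iff₀ (by positivity) (by norm_num)]
  linarith

theorem two_pow_mul_half_pow (L : ℕ) : (2 : ℝ) ^ L * (1 / 2) ^ L = 1 := by
  rw [← mul_pow]; norm_num

theorem half_pow_le_one_sub_inv_mul_inv_pow (hL : 8 ≤ L) :
    (1 / 2 : ℝ) ^ L ≤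
      (1 - (1 + 21 / 20 * (1 / 2) ^ L)⁻¹) * ((1 + 21 / 20 * (1 / 2) ^ L)⁻¹) ^ (L - 1) := by
  set p : ℝ := (1 / 2) ^ L
  have hp : 0 < p := by positivity
  have hLp := natCast_mul_half_pow_le hL
  have hpow : (1 + 21 / 20 * p) ^ L ≤ 21 / 20 :=
    calc (1 + 21 / 20 * p) ^ L ≤ Real.exp (L * (21 / 20 * p)) :=
          one_add_pow_le_exp_mul (by linarith) L
      _ ≤ Real.exp (21 / 500) := Real.exp_le_exp.2 (by nlinarith)
      _ ≤ 1 / (1 - 21 / 500) := Real.exp_bound_div_one_sub_of_interval (by norm_num) (by norm_num)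
      _ ≤ 21 / 20 := by norm_num
  have hsplit : (1 - (1 + 21 / 20 * p)⁻¹) * ((1 + 21 / 20 * p)⁻¹) ^ (L - 1)
      = 21 / 20 * p * ((1 + 21 / 20 * p) ^ L)⁻¹ := by
    have h1 : 1 - (1 + 21 / 20 * p)⁻¹ = 21 / 20 * p * (1 + 21 / 20 * p)⁻¹ := by
      field_simp; ring
    rw [h1, mul_assoc, ← pow_succ', Nat.sub_add_cancel (by omega), inv_pow]
  rw [hsplit, le_mul_inv_iff₀ (by positivity)]
  nlinarith

theorem exp_twentyone_twentieths_le : Real.exp (21 / 20) ≤ 3 := by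
  have h := Real.exp_bound_div_one_sub_of_interval (x := 1 / 20) (by norm_num) (by norm_num)
  have he := Real.exp_one_lt_d9
  rw [show (21 / 20 : ℝ) = 1 + 1 / 20 by norm_num, Real.exp_add]
  nlinarith [Real.exp_pos 1, Real.exp_pos (1 / 20)]

theorem third_le_inv_pow_two_pow (L : ℕ) :
    (1 / 3 : ℝ) ≤ ((1 + 21 / 20 * (1 / 2) ^ L)⁻¹) ^ (2 ^ L) := by
  have h : (1 + 21 / 20 * (1 / 2 : ℝ) ^ L) ^ (2 ^ L) ≤ 3 :=
    calc (1 + 21 / 20 * (1 / 2 : ℝ) ^ L) ^ (2 ^ L)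
        ≤ Real.exp ((2 ^ L : ℕ) * (21 / 20 * (1 / 2) ^ L)) :=
          one_add_pow_le_exp_mul (by linarith [pow_pos (by norm_num : (0 : ℝ) < 1 / 2) L]) _
      _ = Real.exp (21 / 20) := by
          push_cast
          rw [mul_left_comm, two_pow_mul_half_pow, mul_one]
      _ ≤ 3 := exp_twentyone_twentieths_le
  rw [inv_pow, one_div]
  exact inv_anti₀ (by positivity) h

theorem one_sub_half_pow_pow_le (hL : 8 ≤ L) :
    (1 - (1 / 2 : ℝ) ^ L) ^ (2 ^ L - L) ≤ 2 / 5 := by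
  have hLp := natCast_mul_half_pow_le hL
  have hL2 : L ≤ 2 ^ L := by linarith [twentyfive_mul_le_two_pow hL]
  calc (1 - (1 / 2 : ℝ) ^ L) ^ (2 ^ L - L)
      ≤ Real.exp ((2 ^ L - L : ℕ) * -(1 / 2) ^ L) := by
        rw [sub_eq_add_neg]
        exact one_add_pow_le_exp_mul (neg_le_neg (pow_le_one₀ (by norm_num) (by norm_num))) _
    _ = Real.exp (-1) * Real.exp (L * (1 / 2) ^ L) := by
        rw [← Real.exp_add, Nat.cast_sub hL2]
        push_cast
        congr 1
        linear_combination -(two_pow_mul_half_pow L)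
    _ ≤ 0.3678794412 * (1 / (1 - 1 / 25)) := by
        gcongr
        · exact Real.exp_neg_one_lt_d9.le
        · exact (Real.exp_le_exp.2 hLp).trans
            (Real.exp_bound_div_one_sub_of_interval (by norm_num) (by norm_num))
    _ ≤ 2 / 5 := by norm_num

end Numerics

namespace IsAvoidanceSeq

variable {L : ℕ} {f : ℕ → ℝ}

/-- With `p = 2^(-L)`, the ratio `r = (1 + 21p/20)⁻¹` satisfies the hypothesis
`p ≤ (1 - r) r^(L-1)` of `mul_le_succ`, while `r^(2^L) ≥ e^(-21/20) ≥ 1/3`. -/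
theorem inv_pow_le (hf : IsAvoidanceSeq ((1 / 2) ^ L) L f) (hL : 8 ≤ L) (n : ℕ) :
    ((1 + 21 / 20 * (1 / 2) ^ L)⁻¹) ^ n ≤ f n := by
  have hp : (0 : ℝ) < (1 / 2) ^ L := by positivity
  have hr0 : (0 : ℝ) ≤ (1 + 21 / 20 * (1 / 2) ^ L)⁻¹ := by positivity
  have hr1 : (1 + 21 / 20 * (1 / 2 : ℝ) ^ L)⁻¹ ≤ 1 := inv_le_one_of_one_le₀ (by linarith)
  exact hf.pow_le (by omega) hr0
    (hf.mul_le_succ (by omega) hr0 hr1 (half_pow_le_one_sub_inv_mul_inv_pow hL)) n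

theorem pos (hf : IsAvoidanceSeq ((1 / 2) ^ L) L f) (hL : 8 ≤ L) (n : ℕ) : 0 < f n :=
  (pow_pos (by positivity) n).trans_le (hf.inv_pow_le hL n)

theorem inv_three_pow_le (hf : IsAvoidanceSeq ((1 / 2) ^ L) L f) (hL : 8 ≤ L) (j : ℕ) :
    (1 / 3 : ℝ) ^ j ≤ f (j * 2 ^ L) :=
  calc (1 / 3 : ℝ) ^ j ≤ (((1 + 21 / 20 * (1 / 2) ^ L)⁻¹) ^ (2 ^ L)) ^ j :=
        pow_le_pow_left₀ (by norm_num) (third_le_inv_pow_two_pow L) j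
    _ = ((1 + 21 / 20 * (1 / 2) ^ L)⁻¹) ^ (j * 2 ^ L) := by rw [← pow_mul, Nat.mul_comm]
    _ ≤ f (j * 2 ^ L) := hf.inv_pow_le hL _

theorem inv_four_pow_lt_sub (hf : IsAvoidanceSeq ((1 / 2) ^ L) L f) (hL : 8 ≤ L) (j : ℕ) :
    (1 / 4 : ℝ) ^ (j + 1) < f (j * 2 ^ L) - f ((j + 1) * 2 ^ L) := by
  have hpos : ∀ n, 0 ≤ f n := fun n => (hf.pos hL n).le
  have hL2 : L ≤ 2 ^ L := by linarith [twentyfive_mul_le_two_pow hL]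
  have hsub := hf.mul_le_sub (by positivity) hpos (m := j * 2 ^ L + L - 1) (by omega)
    (2 ^ L - L + 1)
  rw [show j * 2 ^ L + L - 1 + (2 ^ L - L + 1) = (j + 1) * 2 ^ L by rw [add_mul]; omega]
    at hsub
  have hanti : f (j * 2 ^ L + L - 1) ≤ f (j * 2 ^ L) :=
    hf.antitone (by positivity) hpos (by omega)
  have hcount : (24 / 25 : ℝ) ≤ ((2 ^ L - L + 1 : ℕ) : ℝ) * (1 / 2) ^ L := by
    rw [Nat.cast_add, Nat.cast_sub hL2]
    push_cast
    linarith [two_pow_mul_half_pow L, natCast_mul_half_pow_le hL,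
      pow_pos (by norm_num : (0 : ℝ) < 1 / 2) L]
  have hgeom : (1 / 4 : ℝ) ^ (j + 1) ≤ 3 / 4 * (1 / 3) ^ (j + 1) := by
    rw [show (1 / 4 : ℝ) = 3 / 4 * (1 / 3) by norm_num, mul_pow]
    gcongr
    exact pow_le_of_le_one (by norm_num) (by norm_num) (by omega)
  calc (1 / 4 : ℝ) ^ (j + 1) ≤ 3 / 4 * (1 / 3) ^ (j + 1) := hgeom
    _ < 24 / 25 * (1 / 3) ^ (j + 1) := mul_lt_mul_of_pos_right (by norm_num) (by positivity)
    _ ≤ ((2 ^ L - L + 1 : ℕ) : ℝ) * (1 / 2) ^ L * f ((j + 1) * 2 ^ L) :=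
        mul_le_mul hcount (hf.inv_three_pow_le hL (j + 1)) (by positivity) (by positivity)
    _ ≤ f (j * 2 ^ L + L - 1) - f ((j + 1) * 2 ^ L) := hsub
    _ ≤ f (j * 2 ^ L) - f ((j + 1) * 2 ^ L) := by linarith

theorem sub_lt_two_fifths_pow (hf : IsAvoidanceSeq ((1 / 2) ^ L) L f) (hL : 8 ≤ L) (j : ℕ) :
    f (j * 2 ^ L) - f ((j + 1) * 2 ^ L) < (2 / 5 : ℝ) ^ j := by
  have hp0 : (0 : ℝ) < (1 / 2) ^ L := by positivity
  have hp1 : (1 / 2 : ℝ) ^ L ≤ 1 := pow_le_one₀ (by norm_num) (by norm_num)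
  have hupper :=
    hf.le_one_sub_pow (by omega) (by positivity) hp1 (fun n => (hf.pos hL n).le) (j * 2 ^ L)
  have hexp : j * (2 ^ L - L) ≤ j * 2 ^ L - (L - 1) := by
    rcases j with _ | j
    · simp
    · rw [Nat.mul_sub]
      have := Nat.le_mul_of_pos_left L (by omega : 0 < j + 1)
      omega
  calc f (j * 2 ^ L) - f ((j + 1) * 2 ^ L) < f (j * 2 ^ L) := sub_lt_self _ (hf.pos hL _)
    _ ≤ (1 - (1 / 2) ^ L) ^ (j * (2 ^ L - L)) :=
        hupper.trans (pow_le_pow_of_le_one (by linarith) (by linarith) hexp)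
    _ ≤ (2 / 5) ^ j := by
        rw [mul_comm, pow_mul]
        exact pow_le_pow_left₀ (pow_nonneg (by linarith) _) (one_sub_half_pow_pow_le hL) j

end IsAvoidanceSeq

section CoinFlips

variable {ι : Type*}

theorem preimage_restrict_image_of_dependsOn {α : ι → Type*} {A : Set (∀ i, α i)} {s : Finset ι}
    (hA : DependsOn (· ∈ A) (s : Set ι)) : s.restrict ⁻¹' (s.restrict '' A) = A :=
  Set.Subset.antisymm (fun _ ⟨_, hx, hxy⟩ => Eq.mp (hA fun i hi => congrFun hxy ⟨i, hi⟩) hx)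
    (Set.subset_preimage_image _ _)

theorem measurableSet_setOf_forall_mem_eq (t : Finset ι) (g : ι → Bool) :
    MeasurableSet {y : ι → Bool | ∀ i ∈ t, y i = g i} := by
  simp only [Set.ofPred_forall]
  exact .biInter t.countable_toSet fun i _ =>
    measurableSet_eq_fun (measurable_pi_apply i) measurable_const

theorem measurableSet_of_dependsOn {A : Set (ι → Bool)} {s : Finset ι}
    (hA : DependsOn (· ∈ A) (s : Set ι)) : MeasurableSet A := by
  rw [← preimage_restrict_image_of_dependsOn hA]
  exact Finset.measurable_restrict s (Set.toFinite _).measurableSet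

namespace IsCoinFlips

variable {μ : Measure (ι → Bool)} {s t : Finset ι}

theorem measure_restrict_preimage_singleton_inter (hμ : IsCoinFlips μ) (hst : Disjoint s t)
    (w : s → Bool) (g : ι → Bool) :
    μ (s.restrict ⁻¹' ({w} : Set (s → Bool)) ∩ {y | ∀ i ∈ t, y i = g i}) =
      (1 / 2) ^ s.card * (1 / 2) ^ t.card := by
  have h : s.restrict ⁻¹' ({w} : Set (s → Bool)) ∩ {y | ∀ i ∈ t, y i = g i}
      = {y | ∀ i ∈ s ∪ t, y i = Function.updateFinset g s w i} := by
    ext y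
    simp only [Set.mem_inter_iff, Set.mem_preimage, Set.mem_singleton_iff, Set.mem_ofPred_eq,
      Finset.mem_union, Function.updateFinset, funext_iff, Finset.restrict]
    constructor
    · rintro ⟨hs, ht⟩ i (hi | hi)
      · simp [hi, ← hs ⟨i, hi⟩]
      · simp [Finset.disjoint_right.1 hst hi, ht i hi]
    · intro h
      exact ⟨fun i => by simpa [i.2] using h i (Or.inl i.2),
        fun i hi => by simpa [Finset.disjoint_right.1 hst hi] using h i (Or.inr hi)⟩
  rw [h, hμ.2, Finset.card_union_of_disjoint hst, pow_add]

theorem measure_preimage_restrict_inter (hμ : IsCoinFlips μ) (hst : Disjoint s t)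
    (S : Set (s → Bool)) (g : ι → Bool) :
    μ (s.restrict ⁻¹' S ∩ {y | ∀ i ∈ t, y i = g i}) =
      S.toFinset.card * ((1 / 2) ^ s.card * (1 / 2) ^ t.card) := by
  have hS : s.restrict ⁻¹' S = ⋃ w ∈ S.toFinset, s.restrict (π := fun _ => Bool) ⁻¹' {w} := by
    ext; simp
  rw [hS, Set.iUnion₂_inter, measure_biUnion_finset]
  · simp [hμ.measure_restrict_preimage_singleton_inter hst]
  · intro w _ w' _ hne
    exact Disjoint.mono Set.inter_subset_left Set.inter_subset_left
      ((Set.disjoint_singleton.2 hne).preimage _)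
  · intro w _
    exact ((Finset.measurable_restrict _) (measurableSet_singleton w)).inter
      (measurableSet_setOf_forall_mem_eq t g)

theorem measure_inter_cylinder (hμ : IsCoinFlips μ) {A : Set (ι → Bool)}
    (hA : DependsOn (· ∈ A) (s : Set ι)) (hst : Disjoint s t) (g : ι → Bool) :
    μ (A ∩ {y | ∀ i ∈ t, y i = g i}) = μ A * (1 / 2) ^ t.card := by
  have hμA := hμ.measure_preimage_restrict_inter (Finset.disjoint_empty_right s)
    (s.restrict '' A) g
  simp only [Finset.notMem_empty, IsEmpty.forall_iff, implies_true, Set.ofPred_true,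
    Set.inter_univ, Finset.card_empty, pow_zero, mul_one] at hμA
  rw [← preimage_restrict_image_of_dependsOn hA, hμ.measure_preimage_restrict_inter hst, hμA,
    mul_assoc]

end IsCoinFlips

end CoinFlips

section Occurrences

variable {ε : ℝ} {k : ℕ} {μ : Measure (ℤ → Bool)}

theorem EndsAt.not_endsAt {y : ℤ → Bool} {b c : ℤ} (hb : EndsAt ε k y b)
    (hbc : b - ell ε k < c) (hcb : c < b) : ¬EndsAt ε k y c := fun hc => by
  have := hb.2 (b - c).toNat (by omega) (by omega)
  rw [show b - ((b - c).toNat : ℤ) = c by omega, hc.1] at this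
  exact Bool.false_ne_true this

theorem setOf_endsAt_eq (hL : 0 < ell ε k) (c : ℤ) :
    {y | EndsAt ε k y c} = {y | ∀ i ∈ Finset.Ioc (c - ell ε k) c, y i = decide (i ≠ c)} := by
  ext y
  simp only [Set.mem_ofPred_eq, Finset.mem_Ioc]
  constructor
  · rintro ⟨hc, hlt⟩ i ⟨hi1, hi2⟩
    rcases eq_or_lt_of_le hi2 with rfl | hic
    · simpa using hc
    · have := hlt (c - i).toNat (by omega) (by omega)
      rw [show c - ((c - i).toNat : ℤ) = i by omega] at this
      simpa [hic.ne] using this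
  · intro h
    refine ⟨by simpa using h c ⟨by omega, le_rfl⟩, fun i hi1 hi2 => ?_⟩
    simpa [show i ≠ 0 by omega] using h (c - i) ⟨by omega, by omega⟩

theorem measurableSet_setOf_endsAt (hL : 0 < ell ε k) (c : ℤ) :
    MeasurableSet {y | EndsAt ε k y c} := by
  rw [setOf_endsAt_eq hL]
  exact measurableSet_setOf_forall_mem_eq _ _

def avoiding (ε : ℝ) (k : ℕ) (n : ℤ) : Set (ℤ → Bool) :=
  {y | ∀ c : ℤ, ell ε k ≤ c → c ≤ n → ¬EndsAt ε k y c}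

theorem avoiding_anti {m n : ℤ} (hmn : m ≤ n) : avoiding ε k n ⊆ avoiding ε k m :=
  fun _ hy c hLc hcm => hy c hLc (hcm.trans hmn)

theorem avoiding_eq_univ {n : ℤ} (hn : n < ell ε k) : avoiding ε k n = Set.univ :=
  Set.eq_univ_of_forall fun _ _ hLc hcn => absurd (hLc.trans hcn) (not_le.2 hn)

theorem dependsOn_avoiding (hL : 0 < ell ε k) (n : ℤ) :
    DependsOn (· ∈ avoiding ε k n) (Finset.Icc 1 n : Set ℤ) := by
  have key : ∀ y z : ℤ → Bool, (∀ i ∈ Finset.Icc 1 n, y i = z i) →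
      y ∈ avoiding ε k n → z ∈ avoiding ε k n := by
    intro y z hyz hy c hLc hcn ⟨hzc, hz⟩
    refine hy c hLc hcn ⟨?_, fun i hi1 hi2 => ?_⟩
    · rw [hyz c (Finset.mem_Icc.2 ⟨by omega, hcn⟩), hzc]
    · rw [hyz (c - i) (Finset.mem_Icc.2 ⟨by omega, by omega⟩), hz i hi1 hi2]
  exact fun y z hyz => propext ⟨key y z hyz, key z y fun i hi => (hyz i hi).symm⟩

theorem avoiding_eq_union (hL : 0 < ell ε k) (n : ℤ) :
    avoiding ε k n =
      avoiding ε k (n + 1) ∪ (avoiding ε k (n + 1 - ell ε k) ∩ {y | EndsAt ε k y (n + 1)}) := by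
  ext y
  constructor
  · intro hy
    by_cases hend : EndsAt ε k y (n + 1)
    · exact Or.inr ⟨fun c hLc hc => hy c hLc (by omega), hend⟩
    · refine Or.inl fun c hLc hc => ?_
      rcases eq_or_lt_of_le hc with rfl | hc
      · exact hend
      · exact hy c hLc (by omega)
  · rintro (hy | ⟨hy, hend⟩) c hLc hcn
    · exact hy c hLc (by omega)
    · by_cases hc : c ≤ n + 1 - ell ε k
      · exact hy c hLc hc
      · exact hend.not_endsAt (by omega) (by omega)

theorem measure_avoiding_eq (hμ : IsCoinFlips μ) (hL : 0 < ell ε k) {n : ℤ}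
    (hn : ell ε k ≤ n + 1) :
    μ (avoiding ε k n) =
      μ (avoiding ε k (n + 1)) + μ (avoiding ε k (n + 1 - ell ε k)) * (1 / 2) ^ ell ε k := by
  have hdisj : Disjoint (avoiding ε k (n + 1)) {y | EndsAt ε k y (n + 1)} :=
    Set.disjoint_left.2 fun y hy hend => hy (n + 1) hn le_rfl hend
  rw [avoiding_eq_union hL n, measure_union (hdisj.mono_right Set.inter_subset_right)
    ((measurableSet_of_dependsOn (dependsOn_avoiding hL _)).inter
      (measurableSet_setOf_endsAt hL _)), setOf_endsAt_eq hL,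
    hμ.measure_inter_cylinder (dependsOn_avoiding hL _), Int.card_Ioc]
  · simp
  · rw [Finset.disjoint_left]
    intro i hi hi'
    simp only [Finset.mem_Icc, Finset.mem_Ioc] at hi hi'
    omega

theorem isAvoidanceSeq_measure_avoiding (hμ : IsCoinFlips μ) (hL : 0 < ell ε k) :
    IsAvoidanceSeq ((1 / 2) ^ ell ε k) (ell ε k) fun n : ℕ => (μ (avoiding ε k n)).toReal where
  eq_one n hn := by
    have := hμ.1
    rw [avoiding_eq_univ (by omega), measure_univ, ENNReal.toReal_one]
  succ_eq n hn := by
    have := hμ.1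
    rw [Nat.cast_sub hn, measure_avoiding_eq hμ hL (n := n) (by omega),
      ENNReal.toReal_add (measure_ne_top _ _) (by finiteness), ENNReal.toReal_mul,
      ENNReal.toReal_pow, ENNReal.toReal_div, ENNReal.toReal_one, ENNReal.toReal_ofNat]
    push_cast
    ring

theorem setOf_firstEnd_eq_diff (a b : ℤ) :
    {y | ∃ h : ℤ, (ell ε k : ℤ) ≤ h ∧ EndsAt ε k y h ∧
        (∀ c : ℤ, (ell ε k : ℤ) ≤ c → c < h → ¬EndsAt ε k y c) ∧ a < h ∧ h ≤ b} =
      avoiding ε k a \ avoiding ε k b := by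
  ext y
  constructor
  · rintro ⟨h, hLh, hend, hfirst, hah, hhb⟩
    exact ⟨fun c hLc hca => hfirst c hLc (by omega), fun hy => hy h hLh hhb hend⟩
  · rintro ⟨hya, hyb⟩
    simp only [avoiding, Set.mem_ofPred_eq, not_forall, not_not] at hyb
    obtain ⟨c₀, hLc₀, hc₀b, hc₀⟩ := hyb
    obtain ⟨h, ⟨hLh, hend⟩, hmin⟩ := Int.exists_least_of_bdd
      (P := fun c => ell ε k ≤ c ∧ EndsAt ε k y c) ⟨ell ε k, fun c hc => hc.1⟩ ⟨c₀, hLc₀, hc₀⟩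
    refine ⟨h, hLh, hend, fun c hLc hch hc => (hmin c ⟨hLc, hc⟩).not_gt hch, ?_,
      (hmin c₀ ⟨hLc₀, hc₀⟩).trans hc₀b⟩
    by_contra hha
    exact hya h hLh (not_lt.1 hha) hend

theorem measure_avoiding_diff (hμ : IsCoinFlips μ) (hL : 0 < ell ε k) {m n : ℕ} (hmn : m ≤ n) :
    μ (avoiding ε k m \ avoiding ε k n) =
      ENNReal.ofReal ((μ (avoiding ε k m)).toReal - (μ (avoiding ε k n)).toReal) := by
  have := hμ.1
  rw [measure_sdiff (avoiding_anti (by exact_mod_cast hmn))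
      (measurableSet_of_dependsOn (dependsOn_avoiding hL _)).nullMeasurableSet
      (measure_ne_top _ _), ENNReal.ofReal_sub _ ENNReal.toReal_nonneg,
    ENNReal.ofReal_toReal (measure_ne_top _ _), ENNReal.ofReal_toReal (measure_ne_top _ _)]

end Occurrences

theorem exists_forall_le_ell {ε : ℝ} (hε : 0 < ε) (N : ℕ) :
    ∃ K, ∀ k, K ≤ k → N ≤ ell ε k := by
  obtain ⟨K, hK⟩ := pow_unbounded_of_one_lt (N : ℝ) (by linarith : 1 < 1 + ε)
  refine ⟨K, fun k hk => ?_⟩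
  have := (hK.le.trans (pow_le_pow_right₀ (by linarith) hk)).trans (Nat.le_ceil _)
  exact_mod_cast this

theorem two_rpow_neg_two_mul_sub_two (j : ℕ) :
    (2 : ℝ) ^ (-(2 * j : ℝ) - 2) = (1 / 4) ^ (j + 1) := by
  rw [show -(2 * j : ℝ) - 2 = -((2 * (j + 1) : ℕ) : ℝ) by push_cast; ring,
    Real.rpow_neg (by norm_num), Real.rpow_natCast, pow_mul, ← inv_pow]
  norm_num

theorem five_halves_rpow_neg (j : ℕ) : (5 / 2 : ℝ) ^ (-(j : ℝ)) = (2 / 5) ^ j := by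
  rw [Real.rpow_neg (by norm_num), Real.rpow_natCast, ← inv_pow]
  norm_num

end BHS

/-- There is `K` such that for all `k ≥ K` and every `j ≥ 0`, the
position `T` at which the first occurrence of `I_k` (in `(y_j)_{j ≥ 1}`) ends
satisfies `2^{-2j-2} < P(jβ_k < T ≤ (j+1)β_k) < (5/2)^{-j}`. -/
theorem statement17 (ε : ℝ) (hε : ε ∈ Set.Ioo (0 : ℝ) (1 / 2)) :
    ∃ K : ℕ, ∀ k : ℕ, K ≤ k →
      ∀ μ : MeasureTheory.Measure (ℤ → Bool), BHS.IsCoinFlips μ →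
      ∀ j : ℕ,
        ENNReal.ofReal ((2 : ℝ) ^ (-(2 * j : ℝ) - 2)) <
          μ {y | ∃ h : ℤ, (BHS.ell ε k : ℤ) ≤ h ∧ BHS.EndsAt ε k y h ∧
              (∀ c : ℤ, (BHS.ell ε k : ℤ) ≤ c → c < h → ¬ BHS.EndsAt ε k y c) ∧
              (j * BHS.beta ε k : ℤ) < h ∧ h ≤ ((j + 1) * BHS.beta ε k : ℤ)} ∧
        μ {y | ∃ h : ℤ, (BHS.ell ε k : ℤ) ≤ h ∧ BHS.EndsAt ε k y h ∧
              (∀ c : ℤ, (BHS.ell ε k : ℤ) ≤ c → c < h → ¬ BHS.EndsAt ε k y c) ∧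
              (j * BHS.beta ε k : ℤ) < h ∧ h ≤ ((j + 1) * BHS.beta ε k : ℤ)} <
          ENNReal.ofReal ((5 / 2 : ℝ) ^ (-(j : ℝ))) := by
  obtain ⟨K, hK⟩ := BHS.exists_forall_le_ell hε.1 8
  refine ⟨K, fun k hk μ hμ j => ?_⟩
  have hL : 8 ≤ BHS.ell ε k := hK k hk
  have hf := BHS.isAvoidanceSeq_measure_avoiding hμ (ε := ε) (k := k) (by omega)
  rw [BHS.setOf_firstEnd_eq_diff,
    show (j : ℤ) * BHS.beta ε k = ((j * 2 ^ BHS.ell ε k : ℕ) : ℤ) by push_cast [BHS.beta]; rfl,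
    show ((j : ℤ) + 1) * BHS.beta ε k = (((j + 1) * 2 ^ BHS.ell ε k : ℕ) : ℤ) by
      push_cast [BHS.beta]; rfl,
    BHS.measure_avoiding_diff hμ (by omega) (by gcongr; omega),
    BHS.two_rpow_neg_two_mul_sub_two, BHS.five_halves_rpow_neg]
  exact ⟨(ENNReal.ofReal_lt_ofReal_iff_of_nonneg (by positivity)).2 (hf.inv_four_pow_lt_sub hL j),
    (ENNReal.ofReal_lt_ofReal_iff (by positivity)).2 (hf.sub_lt_two_fifths_pow hL j)⟩
end
end
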